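/- Let x be an irrational real number with NICF digits a_0, a_1, a_2, …. Then for every i ≥ 1: |a_i| ≥ 2; if a_i = 2 then a_{i+1} ≥ 2; and if a_i = −2 then a_{i+1} ≤ −2. -/

import Mathlib

open Filter Pointwise

/-- NICF iterates: `x₀ = x`, `x_{i+1} = 1/(x_i - ⌊x_i⌉)`, with `⌊t⌉ = round t = ⌊t + 1/2⌋`. -/
noncomputable def nicfX (x : ℝ) : ℕ → ℝ
  | 0 => x
  | n + 1 => 1 / (nicfX x n - round (nicfX x n))

/-- The `i`-th NICF digit of `x`. -/
noncomputable def nicfDigit (x : ℝ) (i : ℕ) : ℤ := round (nicfX x i)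

/-- The `i`-th NICF digit is genuinely defined: the algorithm has not terminated before
step `i` (i.e. `x_m ≠ a_m` for all `m < i`). -/
def nicfDefined (x : ℝ) (i : ℕ) : Prop :=
  ∀ m, m < i → nicfX x m ≠ (nicfDigit x m : ℝ)

/-- `NICFset r`: the reals all of whose NICF digits `a_i` with `i ≥ 1` satisfy `|a_i| ≤ r`. -/
def NICFset (r : ℤ) : Set ℝ :=
  {x | ∀ i : ℕ, 1 ≤ i → nicfDefined x i → |nicfDigit x i| ≤ r}

/-!
For irrational `x` every iterate `x_n` is irrational, so `x_n - a_n` is nonzero and strictly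
smaller than `1/2` in absolute value; hence `|x_{n+1}| > 2` and `|a_{n+1}| ≥ 2`. The sign of
`x_{n+1}` is the sign of `x_n - a_n`. If `a_n = 2` then `x_n` lies near `2` with `|x_n| > 2`,
so `x_n > a_n`, and `x_{n+1} > 2` forces `a_{n+1} ≥ 2`; the case `a_n = -2` is symmetric.
-/

section Round

variable {t : ℝ}

lemma two_le_round_of_three_halves_le (h : 3 / 2 ≤ t) : 2 ≤ round t := by
  rw [round_eq, Int.le_floor]
  push_cast
  linarith

lemma round_le_neg_two_of_lt_neg_three_halves (h : t < -(3 / 2)) : round t ≤ -2 := by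
  rw [round_eq, ← Int.lt_add_one_iff, Int.floor_lt]
  push_cast
  linarith

lemma two_le_abs_round_of_three_halves_lt_abs (h : 3 / 2 < |t|) : 2 ≤ |round t| := by
  rcases lt_abs.1 h with h | h
  · exact le_abs.2 (Or.inl (two_le_round_of_three_halves_le h.le))
  · have : round t ≤ -2 := round_le_neg_two_of_lt_neg_three_halves (by linarith)
    exact le_abs.2 (Or.inr (by linarith))

lemma two_lt_of_two_lt_abs_of_round_eq_two (h : 2 < |t|) (hr : round t = 2) : 2 < t := by
  have := abs_sub_round t
  rw [hr, abs_le] at this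
  push_cast at this
  rw [abs_of_pos (by linarith)] at h
  exact h

lemma lt_neg_two_of_two_lt_abs_of_round_eq_neg_two (h : 2 < |t|) (hr : round t = -2) :
    t < -2 := by
  have := abs_sub_round t
  rw [hr, abs_le] at this
  push_cast at this
  rw [abs_of_neg (by linarith)] at h
  linarith

lemma Irrational.abs_sub_round_lt (ht : Irrational t) : |t - round t| < 1 / 2 := by
  refine (abs_sub_round t).lt_of_ne fun h => ?_
  rcases (abs_eq (by norm_num)).1 h with h | h
  · exact (ht.sub_intCast (round t)).ne_rat (1 / 2) (by rw [h]; push_cast; ring)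
  · exact (ht.sub_intCast (round t)).ne_rat (-1 / 2) (by rw [h]; push_cast; ring)

end Round

section Iterates

variable {x : ℝ}

lemma nicfX_succ (x : ℝ) (n : ℕ) : nicfX x (n + 1) = (nicfX x n - nicfDigit x n)⁻¹ := by
  rw [nicfX, one_div, nicfDigit]

lemma Irrational.nicfX (hx : Irrational x) (n : ℕ) : Irrational (nicfX x n) := by
  induction n with
  | zero => exact hx
  | succ n ih =>
    rw [nicfX_succ]
    exact (ih.sub_intCast _).inv

lemma two_lt_abs_nicfX_succ (hx : Irrational x) (n : ℕ) : 2 < |nicfX x (n + 1)| := by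
  have hirr := hx.nicfX n
  have hpos : 0 < |nicfX x n - nicfDigit x n| := abs_pos.2 (hirr.sub_intCast _).ne_zero
  rw [nicfX_succ, abs_inv, lt_inv_comm₀ two_pos hpos]
  simpa [nicfDigit] using hirr.abs_sub_round_lt

lemma two_le_abs_nicfDigit_succ (hx : Irrational x) (n : ℕ) : 2 ≤ |nicfDigit x (n + 1)| :=
  two_le_abs_round_of_three_halves_lt_abs ((two_lt_abs_nicfX_succ hx n).trans' (by norm_num))

lemma two_le_nicfDigit_succ (hx : Irrational x) (n : ℕ) (h : (nicfDigit x n : ℝ) < nicfX x n) :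
    2 ≤ nicfDigit x (n + 1) := by
  have hpos : 0 < nicfX x (n + 1) := by
    rw [nicfX_succ]
    exact inv_pos.2 (sub_pos.2 h)
  have := two_lt_abs_nicfX_succ hx n
  rw [abs_of_pos hpos] at this
  exact two_le_round_of_three_halves_le (by linarith)

lemma nicfDigit_succ_le_neg_two (hx : Irrational x) (n : ℕ) (h : nicfX x n < nicfDigit x n) :
    nicfDigit x (n + 1) ≤ -2 := by
  have hneg : nicfX x (n + 1) < 0 := by
    rw [nicfX_succ]
    exact inv_lt_zero.2 (sub_neg.2 h)
  have := two_lt_abs_nicfX_succ hx n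
  rw [abs_of_neg hneg] at this
  exact round_le_neg_two_of_lt_neg_three_halves (by linarith)

end Iterates

theorem nicf_digit_rules (x : ℝ) (hx : Irrational x) :
    ∀ i : ℕ, 1 ≤ i →
      2 ≤ |nicfDigit x i| ∧
      (nicfDigit x i = 2 → 2 ≤ nicfDigit x (i + 1)) ∧
      (nicfDigit x i = -2 → nicfDigit x (i + 1) ≤ -2) := by
  intro i hi
  obtain ⟨n, rfl⟩ := Nat.exists_eq_add_of_le' hi
  have hbig := two_lt_abs_nicfX_succ hx n
  refine ⟨two_le_abs_nicfDigit_succ hx n, fun h => ?_, fun h => ?_⟩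
  · apply two_le_nicfDigit_succ hx
    rw [h]
    exact_mod_cast two_lt_of_two_lt_abs_of_round_eq_two hbig h
  · apply nicfDigit_succ_le_neg_two hx
    rw [h]
    exact_mod_cast lt_neg_two_of_two_lt_abs_of_round_eq_neg_two hbig h
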